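/- arXiv:2204.05099 — 4 statements merged into one kernel-verified Lean document; each statement's English description precedes it below -/
import Mathlib

section
/- Let K : ℝ^k \ {0} → ℂ satisfy the cancellation condition ∫_{Ω_R \ Ω_r} K(y) dy = 0 for all 0 < r < R, and the size condition |K(x)| ≤ |x|^{-k}. Let Γ ⊆ ℕ₀^k \ {0} be finite and define Ψ_t(ξ) := p.v. ∫_{Ω_t} e^{2πi ξ·(y)^Γ} K(y) dy for ξ ∈ ℝ^Γ. Then for every fixed c ∈ (0,1), every t > 0 and every ξ, |Ψ_t(ξ) − Ψ_{ct}(ξ)| ≤ C |t^A ξ|_∞, where C depends only on k, |Γ|, c, and t^A ξ := (t^{|γ|} ξ_γ : γ ∈ Γ) with |γ| = γ_1 + ... + γ_k, and |·|_∞ the sup norm. -/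
/-!
By the cancellation condition one may subtract `1` from the exponential. For `|y| ≤ t` the
phase satisfies `|ξ·(y)^Γ| ≤ (∑_γ |ξ_γ| t^{|γ|}) |y| / t`, so `|e^{2πiθ} − 1| ≤ 2π|θ|` and
`|K(y)| ≤ |y|^{-k}` bound the new integrand by a multiple of `|y|^{1-k}`, which is integrable
near the origin and whose integral over `B(0,s)` is `s` times its integral over the unit ball.
Hence every truncation of `Ψ_s`, and so `Ψ_s` itself, is `O(|t^A ξ|_∞)` for `s ≤ t`, and the
triangle inequality bounds `Ψ_t − Ψ_{ct}`.
-/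

open MeasureTheory Filter Topology Metric Module Real Complex
open scoped ENNReal

theorem norm_exp_two_pi_I_mul_sub_one_le (θ : ℝ) :
    ‖exp (2 * π * I * θ) - 1‖ ≤ 2 * π * |θ| := by
  have h := Real.norm_exp_I_mul_ofReal_sub_one_le (x := 2 * π * θ)
  rw [Real.norm_eq_abs, abs_mul, abs_of_pos two_pi_pos] at h
  rwa [show (2 * π * I * θ : ℂ) = I * ↑(2 * π * θ) by push_cast; ring]

section

variable {E : Type*} [NormedAddCommGroup E] [NormedSpace ℝ E]

theorem dilate_subset_ball {Ω : Set E} (hΩ : Ω ⊆ ball 0 1) {s : ℝ} (hs : 0 < s) :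
    {x | s⁻¹ • x ∈ Ω} ⊆ ball 0 s := fun x hx ↦ by
  rw [← smul_unitBall_of_pos hs, Set.mem_smul_set_iff_inv_smul_mem₀ hs.ne']
  exact hΩ hx

variable [FiniteDimensional ℝ E] [MeasurableSpace E] [BorelSpace E]
  (μ : Measure E) [μ.IsAddHaarMeasure]

theorem setIntegral_ball_norm_rpow {t : ℝ} (ht : 0 < t) (p : ℝ) :
    ∫ y in ball (0 : E) t, ‖y‖ ^ p ∂μ =
      t ^ (p + finrank ℝ E) * ∫ y in ball (0 : E) 1, ‖y‖ ^ p ∂μ := by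
  have h := μ.setIntegral_comp_smul_of_pos (fun y : E ↦ ‖y‖ ^ p) (ball 0 1) ht
  simp only [smul_unitBall_of_pos ht, norm_smul, norm_of_nonneg ht.le,
    mul_rpow ht.le (norm_nonneg _), integral_const_mul, smul_eq_mul] at h
  rw [rpow_add ht, rpow_natCast, mul_comm (t ^ p), mul_assoc, h,
    mul_inv_cancel_left₀ (by positivity)]

theorem norm_setIntegral_exp_mul_le_of_setIntegral_eq_zero (hd : 1 ≤ finrank ℝ E)
    {K : E → ℂ} (hK : ∀ x, x ≠ 0 → ‖K x‖ ≤ ‖x‖ ^ (-(finrank ℝ E : ℝ)))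
    {S : Set E} (hS : MeasurableSet S) {s : ℝ} (hs : 0 < s) (hSs : S ⊆ ball 0 s)
    (hK0 : ∫ y in S, K y ∂μ = 0) {θ : E → ℝ} (hθ : Measurable θ) {a : ℝ} (ha : 0 ≤ a)
    (hθa : ∀ y ∈ S, |θ y| ≤ a * ‖y‖) :
    ‖∫ y in S, exp (2 * π * I * θ y) * K y ∂μ‖ ≤
      2 * π * a * s * ∫ y in ball (0 : E) 1, ‖y‖ ^ (1 - (finrank ℝ E : ℝ)) ∂μ := by
  set d : ℝ := (finrank ℝ E : ℝ)
  set h : E → ℝ := fun y ↦ 2 * π * a * ‖y‖ ^ (1 - d)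
  have h_int : IntegrableOn h (ball 0 s) μ := by
    refine integrableOn_ball_of_norm_le_rpow hd (C := 2 * π * a) (α := d - 1) (by linarith)
      (ae_of_all _ fun y ↦ ?_) (by fun_prop)
    rw [neg_sub, Real.norm_of_nonneg (by positivity)]
  have h_pt : ∀ y ∈ S, ‖(exp (2 * π * I * θ y) - 1) * K y‖ ≤ h y := by
    intro y hy
    rcases eq_or_ne y 0 with rfl | hy0
    · have : θ 0 = 0 := by simpa using hθa 0 hy
      simp only [this, ofReal_zero, mul_zero, Complex.exp_zero, sub_self, zero_mul, norm_zero, h]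
      positivity
    calc ‖(exp (2 * π * I * θ y) - 1) * K y‖
        ≤ 2 * π * |θ y| * ‖y‖ ^ (-d) := by
          rw [norm_mul]
          exact mul_le_mul (norm_exp_two_pi_I_mul_sub_one_le _) (hK y hy0) (norm_nonneg _)
            (by positivity)
      _ ≤ 2 * π * (a * ‖y‖) * ‖y‖ ^ (-d) := by gcongr; exact hθa y hy
      _ = h y := by
          simp only [h]
          rw [sub_eq_add_neg, rpow_add (norm_pos_iff.2 hy0), rpow_one]
          ring
  by_cases hg : IntegrableOn (fun y ↦ exp (2 * π * I * θ y) * K y) S μ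
  · have hK_meas : AEStronglyMeasurable K (μ.restrict S) := by
      have h_exp : Measurable fun y ↦ exp (-(2 * π * I * θ y)) := by fun_prop
      refine (h_exp.aestronglyMeasurable.mul hg.aestronglyMeasurable).congr (ae_of_all _ ?_)
      intro y
      change cexp _ * (cexp _ * K y) = K y
      rw [← mul_assoc, ← Complex.exp_add, neg_add_cancel, Complex.exp_zero, one_mul]
    have h_sub : IntegrableOn (fun y ↦ (exp (2 * π * I * θ y) - 1) * K y) S μ :=
      (h_int.mono_set hSs).mono' (by fun_prop) (ae_restrict_of_forall_mem hS h_pt)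
    have hK_int : IntegrableOn K S μ := by
      refine (hg.sub h_sub).congr (ae_of_all _ fun y ↦ ?_)
      simp only [Pi.sub_apply]
      ring
    calc ‖∫ y in S, exp (2 * π * I * θ y) * K y ∂μ‖
        = ‖∫ y in S, (exp (2 * π * I * θ y) - 1) * K y ∂μ‖ := by
          rw [← sub_zero (∫ y in S, _ ∂μ), ← hK0, ← integral_sub hg hK_int]
          simp only [sub_mul, one_mul]
      _ ≤ ∫ y in S, h y ∂μ :=
          norm_integral_le_of_norm_le (h_int.mono_set hSs) (ae_restrict_of_forall_mem hS h_pt)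
      _ ≤ ∫ y in ball 0 s, h y ∂μ :=
          setIntegral_mono_set h_int (ae_of_all _ fun y ↦ by positivity) hSs.eventuallyLE
      _ = 2 * π * a * s * ∫ y in ball (0 : E) 1, ‖y‖ ^ (1 - d) ∂μ := by
          rw [integral_const_mul, setIntegral_ball_norm_rpow μ hs, sub_add_cancel, rpow_one]
          ring
  · rw [integral_undef hg, norm_zero]
    have : 0 ≤ ∫ y in ball (0 : E) 1, ‖y‖ ^ (1 - d) ∂μ :=
      setIntegral_nonneg measurableSet_ball fun y _ ↦ by positivity
    positivity

end

section

variable {ι : Type*} [Fintype ι] {p : ℝ≥0∞} [Fact (1 ≤ p)]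

theorem abs_prod_pow_le_norm_pow (y : PiLp p fun _ : ι ↦ ℝ) (γ : ι → ℕ) :
    |∏ i, y i ^ γ i| ≤ ‖y‖ ^ ∑ i, γ i := by
  rw [Finset.abs_prod, ← Finset.prod_pow_eq_pow_sum]
  gcongr with i
  rw [abs_pow]
  exact pow_le_pow_left₀ (abs_nonneg _) (PiLp.norm_apply_le y i) _

theorem abs_prod_pow_le_of_norm_le (y : PiLp p fun _ : ι ↦ ℝ) {γ : ι → ℕ} (hγ : γ ≠ 0)
    {t : ℝ} (ht : 0 < t) (hy : ‖y‖ ≤ t) :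
    |∏ i, y i ^ γ i| ≤ t ^ (∑ i, γ i) * (‖y‖ / t) := by
  have hn : ∑ i, γ i ≠ 0 := fun h ↦ hγ (funext (Finset.sum_eq_zero_iff.1 h · (Finset.mem_univ _)))
  calc |∏ i, y i ^ γ i| ≤ ‖y‖ ^ ∑ i, γ i := abs_prod_pow_le_norm_pow y γ
    _ = t ^ (∑ i, γ i) * (‖y‖ / t) ^ ∑ i, γ i := by rw [div_pow, mul_div_cancel₀ _ (by positivity)]
    _ ≤ t ^ (∑ i, γ i) * (‖y‖ / t) := by
        gcongr
        exact pow_le_of_le_one (by positivity) ((div_le_one ht).2 hy) hn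

end

section

variable {k : ℕ} {Γ : Finset (Fin k → ℕ)}

def monomialPhase (Γ : Finset (Fin k → ℕ)) (ξ : {γ // γ ∈ Γ} → ℝ)
    (y : EuclideanSpace ℝ (Fin k)) : ℝ :=
  ∑ γ : {γ // γ ∈ Γ}, ξ γ * ∏ i, y i ^ γ.1 i

theorem measurable_monomialPhase (ξ : {γ // γ ∈ Γ} → ℝ) : Measurable (monomialPhase Γ ξ) := by
  unfold monomialPhase
  fun_prop

theorem abs_monomialPhase_le (hΓ0 : ∀ γ ∈ Γ, γ ≠ 0) (ξ : {γ // γ ∈ Γ} → ℝ)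
    {y : EuclideanSpace ℝ (Fin k)} {t : ℝ} (ht : 0 < t) (hy : ‖y‖ ≤ t) :
    |monomialPhase Γ ξ y| ≤ (∑ γ : {γ // γ ∈ Γ}, |ξ γ| * t ^ ∑ i, γ.1 i) / t * ‖y‖ :=
  calc |monomialPhase Γ ξ y| ≤ ∑ γ : {γ // γ ∈ Γ}, |ξ γ| * (t ^ (∑ i, γ.1 i) * (‖y‖ / t)) := by
        refine (Finset.abs_sum_le_sum_abs _ _).trans (Finset.sum_le_sum fun γ _ ↦ ?_)
        rw [abs_mul]
        gcongr
        exact abs_prod_pow_le_of_norm_le y (hΓ0 γ γ.2) ht hy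
    _ = _ := by
        rw [Finset.sum_div, Finset.sum_mul]
        exact Finset.sum_congr rfl fun _ _ ↦ by ring

theorem norm_setIntegral_annulus_le (hk : 1 ≤ k) (hΓ0 : ∀ γ ∈ Γ, γ ≠ 0)
    {Ω : Set (EuclideanSpace ℝ (Fin k))} (hΩ : IsOpen Ω) (hΩ1 : Ω ⊆ ball 0 1)
    {K : EuclideanSpace ℝ (Fin k) → ℂ} (hK : ∀ x, x ≠ 0 → ‖K x‖ ≤ ‖x‖ ^ (-(k : ℝ)))
    {ε s t : ℝ} (hε : 0 < ε) (hεs : ε < s) (hst : s ≤ t)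
    (hK0 : ∫ y in {x | s⁻¹ • x ∈ Ω} \ {x | ε⁻¹ • x ∈ Ω}, K y = 0) (ξ : {γ // γ ∈ Γ} → ℝ) :
    ‖∫ y in {x | s⁻¹ • x ∈ Ω} \ {x | ε⁻¹ • x ∈ Ω}, cexp (2 * π * I * monomialPhase Γ ξ y) * K y‖ ≤
      2 * π * (∑ γ : {γ // γ ∈ Γ}, |ξ γ| * t ^ ∑ i, γ.1 i) *
        ∫ y in ball (0 : EuclideanSpace ℝ (Fin k)) 1, ‖y‖ ^ (1 - (k : ℝ)) := by
  have hs := hε.trans hεs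
  have ht := hs.trans_le hst
  set b := ∑ γ : {γ // γ ∈ Γ}, |ξ γ| * t ^ ∑ i, γ.1 i
  set A := ∫ y in ball (0 : EuclideanSpace ℝ (Fin k)) 1, ‖y‖ ^ (1 - (k : ℝ))
  have hA : 0 ≤ A := setIntegral_nonneg measurableSet_ball fun y _ ↦ by positivity
  have hSs : {x | s⁻¹ • x ∈ Ω} \ {x | ε⁻¹ • x ∈ Ω} ⊆ ball 0 s :=
    Set.sdiff_subset.trans (dilate_subset_ball hΩ1 hs)
  have hS : MeasurableSet ({x | s⁻¹ • x ∈ Ω} \ {x | ε⁻¹ • x ∈ Ω}) :=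
    (hΩ.preimage (continuous_const_smul _)).measurableSet.diff
      (hΩ.preimage (continuous_const_smul _)).measurableSet
  have hd : finrank ℝ (EuclideanSpace ℝ (Fin k)) = k := finrank_euclideanSpace_fin
  have h := norm_setIntegral_exp_mul_le_of_setIntegral_eq_zero volume
    (by rwa [hd]) (by rwa [hd]) hS hs hSs hK0 (measurable_monomialPhase ξ) (a := b / t)
    (by positivity)
    fun y hy ↦ abs_monomialPhase_le hΓ0 ξ ht ((mem_ball_zero_iff.1 (hSs hy)).le.trans hst)
  rw [hd] at h
  calc _ ≤ 2 * π * (b / t) * s * A := h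
    _ = 2 * π * b * A * (s / t) := by ring
    _ ≤ 2 * π * b * A := mul_le_of_le_one_right (by positivity) ((div_le_one ht).2 hst)

end

theorem psi_difference_bound_general (k : ℕ) (hk : 1 ≤ k) (Γ : Finset (Fin k → ℕ))
    (hΓ0 : ∀ γ ∈ Γ, γ ≠ 0)
    (c : ℝ) (hc : c ∈ Set.Ioo (0:ℝ) 1) (cΩ : ℝ) :
    ∃ C > 0, ∀ (Ω : Set (EuclideanSpace ℝ (Fin k))),
      Convex ℝ Ω → IsOpen Ω → Metric.ball 0 cΩ ⊆ Ω → Ω ⊆ Metric.ball 0 1 →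
      ∀ (K : EuclideanSpace ℝ (Fin k) → ℂ),
      (∀ x : EuclideanSpace ℝ (Fin k), x ≠ 0 → ‖K x‖ ≤ ‖x‖ ^ (-(k:ℝ))) →
      (∀ r R : ℝ, 0 < r → r < R →
        (∫ y in ({x | R⁻¹ • x ∈ Ω} \ {x | r⁻¹ • x ∈ Ω}), K y) = 0) →
      ∀ (Ψ : ℝ → ({γ // γ ∈ Γ} → ℝ) → ℂ),
      (∀ t : ℝ, 0 < t → ∀ ξ : {γ // γ ∈ Γ} → ℝ,
        Tendsto (fun ε : ℝ =>
            ∫ y in ({x | t⁻¹ • x ∈ Ω} \ {x | ε⁻¹ • x ∈ Ω}),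
              Complex.exp (2 * Real.pi * Complex.I *
                ((∑ γ : {γ // γ ∈ Γ}, ξ γ * ∏ i, (y i) ^ (γ.1 i) : ℝ) : ℂ)) * K y)
          (𝓝[>] (0:ℝ)) (𝓝 (Ψ t ξ))) →
      ∀ t : ℝ, 0 < t → ∀ ξ : {γ // γ ∈ Γ} → ℝ,
        ‖Ψ t ξ - Ψ (c * t) ξ‖ ≤ C * ⨆ γ : {γ // γ ∈ Γ}, t ^ (∑ i, γ.1 i) * |ξ γ| := by
  set A := ∫ y in ball (0 : EuclideanSpace ℝ (Fin k)) 1, ‖y‖ ^ (1 - (k : ℝ))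
  have hA : 0 ≤ A := setIntegral_nonneg measurableSet_ball fun y _ ↦ by positivity
  refine ⟨4 * π * A * Γ.card + 1, by positivity, ?_⟩
  intro Ω _ hΩ _ hΩ1 K hK hKcancel Ψ hΨ t ht ξ
  set M := ⨆ γ : {γ // γ ∈ Γ}, t ^ (∑ i, γ.1 i) * |ξ γ|
  have hM : 0 ≤ M := Real.iSup_nonneg fun γ ↦ by positivity
  have h_sum : ∑ γ : {γ // γ ∈ Γ}, |ξ γ| * t ^ ∑ i, γ.1 i ≤ Γ.card * M := by
    simpa [mul_comm] using Finset.sum_le_card_nsmul Finset.univ _ M fun γ _ ↦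
      le_ciSup (Set.finite_range _).bddAbove γ
  have h_psi : ∀ s, 0 < s → s ≤ t → ‖Ψ s ξ‖ ≤ 2 * π * (Γ.card * M) * A := fun s hs hst ↦
    le_of_tendsto (hΨ s hs ξ).norm <| by
      filter_upwards [Ioo_mem_nhdsGT hs] with ε hε
      exact (norm_setIntegral_annulus_le hk hΓ0 hΩ hΩ1 hK hε.1 hε.2 hst
        (hKcancel ε s hε.1 hε.2) ξ).trans (by gcongr)
  calc ‖Ψ t ξ - Ψ (c * t) ξ‖ ≤ ‖Ψ t ξ‖ + ‖Ψ (c * t) ξ‖ := norm_sub_le _ _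
    _ ≤ 2 * (2 * π * (Γ.card * M) * A) := by
        linarith [h_psi t ht le_rfl,
          h_psi (c * t) (mul_pos hc.1 ht) (mul_le_of_le_one_left ht.le hc.2.le)]
    _ ≤ (4 * π * A * Γ.card + 1) * M := by linarith

/-- If `Ψ_t(ξ)` is the principal value `p.v. ∫_{Ω_t} e(ξ·(y)^Γ) K(y) dy` for a
Calderón–Zygmund kernel `K` satisfying the size and cancellation conditions, then for a
fixed `c ∈ (0,1)` one has `|Ψ_t(ξ) − Ψ_{ct}(ξ)| ≤ C |t^A ξ|_∞`, where
`t^A ξ = (t^{|γ|} ξ_γ)_γ` and `C` does not depend on `t`, `ξ`, `Ω`, `K`, `Ψ`. -/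
theorem psi_difference_bound (k : ℕ) (hk : 1 ≤ k) (Γ : Finset (Fin k → ℕ))
    (hΓ0 : ∀ γ ∈ Γ, γ ≠ 0) (hΓne : Γ.Nonempty)
    (c : ℝ) (hc : c ∈ Set.Ioo (0:ℝ) 1) (cΩ : ℝ) (hcΩ : cΩ ∈ Set.Ioo (0:ℝ) 1) :
    ∃ C > 0, ∀ (Ω : Set (EuclideanSpace ℝ (Fin k))),
      Convex ℝ Ω → IsOpen Ω → Metric.ball 0 cΩ ⊆ Ω → Ω ⊆ Metric.ball 0 1 →
      ∀ (K : EuclideanSpace ℝ (Fin k) → ℂ),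
      (∀ x : EuclideanSpace ℝ (Fin k), x ≠ 0 → ‖K x‖ ≤ ‖x‖ ^ (-(k:ℝ))) →
      (∀ r R : ℝ, 0 < r → r < R →
        (∫ y in ({x | R⁻¹ • x ∈ Ω} \ {x | r⁻¹ • x ∈ Ω}), K y) = 0) →
      ∀ (Ψ : ℝ → ({γ // γ ∈ Γ} → ℝ) → ℂ),
      (∀ t : ℝ, 0 < t → ∀ ξ : {γ // γ ∈ Γ} → ℝ,
        Tendsto (fun ε : ℝ =>
            ∫ y in ({x | t⁻¹ • x ∈ Ω} \ {x | ε⁻¹ • x ∈ Ω}),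
              Complex.exp (2 * Real.pi * Complex.I *
                ((∑ γ : {γ // γ ∈ Γ}, ξ γ * ∏ i, (y i) ^ (γ.1 i) : ℝ) : ℂ)) * K y)
          (𝓝[>] (0:ℝ)) (𝓝 (Ψ t ξ))) →
      ∀ t : ℝ, 0 < t → ∀ ξ : {γ // γ ∈ Γ} → ℝ,
        ‖Ψ t ξ - Ψ (c * t) ξ‖ ≤ C * ⨆ γ : {γ // γ ∈ Γ}, t ^ (∑ i, γ.1 i) * |ξ γ| :=
  psi_difference_bound_general k hk Γ hΓ0 c hc cΩ
end

section
/- (Rademacher–Menshov inequality) Let K ∈ ℕ, and let f_0, f_1, ..., f_{2^K} be elements of a normed space (or complex numbers). Then for any increasing sequence 0 ≤ n_0 < n_1 < ... < n_M ≤ 2^K, ( Σ_{m=0}^{M-1} |f_{n_{m+1}} − f_{n_m}|² )^{1/2} ≤ √2 Σ_{i=0}^{K} ( Σ_{j} | Σ_{k ∈ I_j^i} (f_{k+1} − f_k) |² )^{1/2}, where I_j^i := [j2^i, (j+1)2^i) ∩ [0, 2^K] and the inner sum over j ranges over all j with I_j^i nonempty. -/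
/-!
Every interval `[a, b) ⊆ [0, 2^K)` is the disjoint union of its maximal dyadic subintervals, those
whose dyadic parent is not contained in `[a, b)`; they have scales `i ≤ K`, and there are at most
two of each scale. Write the increment `f_{n_{m+1}} - f_{n_m}` as `∑_i g_{i,m}`, where `g_{i,m}`
collects the scale-`i` pieces of `[n_m, n_{m+1})`. Minkowski's inequality in `ℓ²` over `m` bounds
the left side by `∑_i (∑_m |g_{i,m}|²)^{1/2}`, and Cauchy–Schwarz over at most two pieces, together
with the disjointness of the pieces for different `m`, gives
`∑_m |g_{i,m}|² ≤ 2 ∑_j |∑_{k ∈ I_j^i} (f_{k+1} - f_k)|²`.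
-/

open Finset

lemma Nat.exists_lt_and_not_succ {p : ℕ → Prop} {N : ℕ} (h0 : p 0) (hN : ¬ p N) :
    ∃ i < N, p i ∧ ¬ p (i + 1) := by
  induction N with
  | zero => exact absurd h0 hN
  | succ N ih =>
    by_cases hpN : p N
    · exact ⟨N, N.lt_succ_self, hpN, hN⟩
    · obtain ⟨i, hi, h⟩ := ih hpN
      exact ⟨i, by omega, h⟩

section

variable {ι κ E : Type*} [SeminormedAddCommGroup E]

lemma norm_sum_sq_le_card_mul (t : Finset ι) (v : ι → E) :
    ‖∑ j ∈ t, v j‖ ^ 2 ≤ #t * ∑ j ∈ t, ‖v j‖ ^ 2 :=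
  (pow_le_pow_left₀ (norm_nonneg _) (norm_sum_le _ _) 2).trans sq_sum_le_card_mul_sum_sq

lemma sum_norm_sum_sq_le_mul {s : Finset κ} {J : κ → Finset ι} {T : Finset ι} {c : ℕ}
    (hJ : (s : Set κ).PairwiseDisjoint J) (hJT : ∀ m ∈ s, J m ⊆ T) (hc : ∀ m ∈ s, #(J m) ≤ c)
    (v : ι → E) :
    ∑ m ∈ s, ‖∑ j ∈ J m, v j‖ ^ 2 ≤ c * ∑ j ∈ T, ‖v j‖ ^ 2 := by
  classical
  calc ∑ m ∈ s, ‖∑ j ∈ J m, v j‖ ^ 2 ≤ ∑ m ∈ s, c * ∑ j ∈ J m, ‖v j‖ ^ 2 :=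
        sum_le_sum fun m hm => (norm_sum_sq_le_card_mul _ _).trans <|
          mul_le_mul_of_nonneg_right (by exact_mod_cast hc m hm) (by positivity)
    _ = c * ∑ j ∈ s.biUnion J, ‖v j‖ ^ 2 := by rw [← mul_sum, sum_biUnion hJ]
    _ ≤ c * ∑ j ∈ T, ‖v j‖ ^ 2 := by
        gcongr
        exact biUnion_subset.mpr hJT

/-- Minkowski's inequality in `ℓ²(s)`, for a finite family of `E`-valued sequences. -/
lemma sqrt_sum_norm_sum_sq_le (s : Finset κ) (t : Finset ι) (v : ι → κ → E) :
    √(∑ m ∈ s, ‖∑ i ∈ t, v i m‖ ^ 2) ≤ ∑ i ∈ t, √(∑ m ∈ s, ‖v i m‖ ^ 2) := by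
  let U : ι → EuclideanSpace ℝ s := fun i => WithLp.toLp 2 fun m => ‖v i m‖
  calc √(∑ m ∈ s, ‖∑ i ∈ t, v i m‖ ^ 2) ≤ √(∑ m ∈ s, (∑ i ∈ t, ‖v i m‖) ^ 2) :=
        Real.sqrt_le_sqrt <| sum_le_sum fun m _ =>
          pow_le_pow_left₀ (norm_nonneg _) (norm_sum_le _ _) 2
    _ = ‖∑ i ∈ t, U i‖ := by
        rw [EuclideanSpace.norm_eq, ← sum_coe_sort s]
        simp [U]
    _ ≤ ∑ i ∈ t, ‖U i‖ := norm_sum_le _ _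
    _ = ∑ i ∈ t, √(∑ m ∈ s, ‖v i m‖ ^ 2) := by
        simp [U, EuclideanSpace.norm_eq, ← sum_coe_sort s]

end

def dyadicInterval (i j : ℕ) : Finset ℕ := Ico (j * 2 ^ i) ((j + 1) * 2 ^ i)

lemma mem_dyadicInterval {i j k : ℕ} : k ∈ dyadicInterval i j ↔ k / 2 ^ i = j := by
  rw [dyadicInterval, mem_Ico]
  constructor
  · exact fun h => Nat.div_eq_of_lt_le h.1 h.2
  · rintro rfl
    exact ⟨Nat.div_mul_le_self _ _,
      (Nat.div_lt_iff_lt_mul (by positivity)).mp (k / 2 ^ i).lt_succ_self⟩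

lemma card_dyadicInterval (i j : ℕ) : #(dyadicInterval i j) = 2 ^ i := by
  rw [dyadicInterval, Nat.card_Ico, add_mul, one_mul, Nat.add_sub_cancel_left]

lemma dyadicInterval_succ (i j : ℕ) :
    dyadicInterval (i + 1) j = Ico (2 * j * 2 ^ i) ((2 * j + 2) * 2 ^ i) := by
  rw [dyadicInterval, pow_succ]
  congr 1 <;> ring

lemma dyadicInterval_subset_Ico_iff {i j a b : ℕ} :
    dyadicInterval i j ⊆ Ico a b ↔ a ≤ j * 2 ^ i ∧ (j + 1) * 2 ^ i ≤ b :=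
  Ico_subset_Ico_iff (Nat.mul_lt_mul_of_pos_right j.lt_succ_self (by positivity))

lemma dyadicInterval_div_subset {i i' : ℕ} (h : i ≤ i') (k : ℕ) :
    dyadicInterval i (k / 2 ^ i) ⊆ dyadicInterval i' (k / 2 ^ i') := by
  obtain ⟨d, rfl⟩ := Nat.exists_eq_add_of_le h
  intro x hx
  rw [mem_dyadicInterval] at hx ⊢
  rw [pow_add, ← Nat.div_div_eq_div_mul, hx, Nat.div_div_eq_div_mul]

def IsMaximalDyadic (a b i j : ℕ) : Prop :=
  dyadicInterval i j ⊆ Ico a b ∧ ¬ dyadicInterval (i + 1) (j / 2) ⊆ Ico a b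

instance (a b i : ℕ) : DecidablePred (IsMaximalDyadic a b i) :=
  fun _ => inferInstanceAs (Decidable (_ ∧ _))

lemma exists_isMaximalDyadic {K a b k : ℕ} (hb : b ≤ 2 ^ K) (hk : k ∈ Ico a b) :
    ∃ i ≤ K, IsMaximalDyadic a b i (k / 2 ^ i) := by
  have h0 : dyadicInterval 0 (k / 2 ^ 0) ⊆ Ico a b := by
    intro x hx
    rw [mem_dyadicInterval, pow_zero, Nat.div_one, Nat.div_one] at hx
    rwa [hx]
  have hK : ¬ dyadicInterval (K + 1) (k / 2 ^ (K + 1)) ⊆ Ico a b := fun h => by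
    have := card_le_card h
    rw [card_dyadicInterval, Nat.card_Ico, pow_succ] at this
    have := K.one_le_two_pow
    omega
  obtain ⟨i, hi, hsub, hnot⟩ := Nat.exists_lt_and_not_succ (p := fun i =>
    dyadicInterval i (k / 2 ^ i) ⊆ Ico a b) h0 hK
  refine ⟨i, Nat.le_of_lt_succ hi, hsub, ?_⟩
  rwa [Nat.div_div_eq_div_mul, ← pow_succ]

lemma eq_of_isMaximalDyadic {a b i i' j j' k : ℕ} (h : IsMaximalDyadic a b i j)
    (h' : IsMaximalDyadic a b i' j') (hk : k ∈ dyadicInterval i j)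
    (hk' : k ∈ dyadicInterval i' j') : i = i' ∧ j = j' := by
  rw [mem_dyadicInterval] at hk hk'
  subst hk hk'
  -- If `i < i'`, the parent of the scale-`i` interval lies in the scale-`i'` one.
  have key : ∀ {i i'}, i < i' → IsMaximalDyadic a b i (k / 2 ^ i) →
      IsMaximalDyadic a b i' (k / 2 ^ i') → False := fun hlt h h' => by
    apply h.2
    rw [Nat.div_div_eq_div_mul, ← pow_succ]
    exact (dyadicInterval_div_subset hlt k).trans h'.1
  rcases lt_trichotomy i i' with hlt | rfl | hlt
  · exact (key hlt h h').elim
  · exact ⟨rfl, rfl⟩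
  · exact (key hlt h' h).elim

lemma not_isMaximalDyadic_of_lt_of_mod_eq {a b i j j' : ℕ} (h : IsMaximalDyadic a b i j)
    (h' : IsMaximalDyadic a b i j') (hlt : j < j') (hmod : j % 2 = j' % 2) : False := by
  have ha := (dyadicInterval_subset_Ico_iff.mp h.1).1
  have hb := (dyadicInterval_subset_Ico_iff.mp h'.1).2
  -- Two maximal intervals of the same parity span the parent of one of them.
  refine (Nat.mod_two_eq_zero_or_one j).elim (fun hj => h.2 ?_) (fun hj => h'.2 ?_) <;>
  · rw [dyadicInterval_succ]
    exact Ico_subset_Ico (ha.trans (Nat.mul_le_mul_right _ (by omega)))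
      ((Nat.mul_le_mul_right _ (by omega)).trans hb)

lemma card_filter_isMaximalDyadic_le_two (a b i : ℕ) (s : Finset ℕ) :
    #(s.filter (IsMaximalDyadic a b i)) ≤ 2 := by
  have hinj : Set.InjOn (· % 2) (s.filter (IsMaximalDyadic a b i)) := by
    intro j hj j' hj' hmod
    simp only [coe_filter, Set.mem_ofPred_eq] at hj hj'
    rcases lt_trichotomy j j' with hlt | heq | hlt
    · exact (not_isMaximalDyadic_of_lt_of_mod_eq hj.2 hj'.2 hlt hmod).elim
    · exact heq
    · exact (not_isMaximalDyadic_of_lt_of_mod_eq hj'.2 hj.2 hlt hmod.symm).elim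
  simpa using card_le_card_of_injOn (t := range 2) (· % 2)
    (fun j _ => mem_range.mpr (Nat.mod_lt _ two_pos)) hinj

lemma sum_sum_isMaximalDyadic {E : Type*} [AddCommMonoid E] {K a b : ℕ} (hb : b ≤ 2 ^ K)
    (x : ℕ → E) :
    ∑ i ∈ range (K + 1), ∑ j ∈ (range (2 ^ (K - i) + 1)).filter (IsMaximalDyadic a b i),
        ∑ k ∈ dyadicInterval i j, x k = ∑ k ∈ Ico a b, x k := by
  rw [sum_sigma', ← sum_biUnion]
  · congr 1
    ext k
    simp only [mem_biUnion, mem_sigma, mem_filter, mem_range, Sigma.exists]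
    constructor
    · rintro ⟨i, j, ⟨-, -, hmax⟩, hk⟩
      exact hmax.1 hk
    · intro hk
      obtain ⟨i, hiK, hmax⟩ := exists_isMaximalDyadic hb hk
      have hj : (k / 2 ^ i + 1) * 2 ^ i ≤ 2 ^ (K - i) * 2 ^ i := by
        rw [← pow_add, Nat.sub_add_cancel hiK]
        exact (dyadicInterval_subset_Ico_iff.mp hmax.1).2.trans hb
      refine ⟨i, k / 2 ^ i, ⟨by omega, ?_, hmax⟩, mem_dyadicInterval.mpr rfl⟩
      have := Nat.le_of_mul_le_mul_right hj (by positivity)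
      omega
  · rintro ⟨i, j⟩ hij ⟨i', j'⟩ hij' hne
    simp only [mem_coe, mem_sigma, mem_filter] at hij hij'
    refine disjoint_left.mpr fun k hk hk' => hne ?_
    obtain ⟨rfl, rfl⟩ := eq_of_isMaximalDyadic hij.2.2 hij'.2.2 hk hk'
    rfl

lemma pairwiseDisjoint_filter_isMaximalDyadic {n : ℕ → ℕ} {M : ℕ}
    (hn : MonotoneOn n (Set.Iic M)) (i : ℕ) (s : Finset ℕ) :
    (range M : Set ℕ).PairwiseDisjoint
      fun m => s.filter (IsMaximalDyadic (n m) (n (m + 1)) i) := by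
  intro m hm m' hm' hne
  wlog hlt : m < m' generalizing m m'
  · exact (this hm' hm hne.symm (by omega)).symm
  simp only [coe_range, Set.mem_Iio] at hm hm'
  have hnm : n (m + 1) ≤ n m' :=
    hn (Set.mem_Iic.mpr (Nat.succ_le_of_lt hm)) (Set.mem_Iic.mpr hm'.le) hlt
  refine disjoint_left.mpr fun j hj hj' => ?_
  have h := (dyadicInterval_subset_Ico_iff.mp (mem_filter.mp hj).2.1).2
  have h' := (dyadicInterval_subset_Ico_iff.mp (mem_filter.mp hj').2.1).1
  have : j * 2 ^ i < (j + 1) * 2 ^ i := Nat.mul_lt_mul_of_pos_right j.lt_succ_self (by positivity)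
  omega

/-- The Rademacher–Menshov inequality (pointwise/scalar form): for
`0 ≤ n_0 < n_1 < … < n_M ≤ 2^K`,
`(Σ_m |f_{n_{m+1}} − f_{n_m}|²)^{1/2} ≤ √2 Σ_{i=0}^K (Σ_j |Σ_{k ∈ I_j^i} (f_{k+1} − f_k)|²)^{1/2}`,
where `I_j^i = [j2^i, (j+1)2^i) ∩ [0, 2^K]`. -/
theorem rademacher_menshov (K M : ℕ) (f : ℕ → ℂ) (n : ℕ → ℕ)
    (hmono : StrictMonoOn n (Set.Iic M)) (hle : n M ≤ 2 ^ K) :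
    Real.sqrt (∑ m ∈ Finset.range M, ‖f (n (m + 1)) - f (n m)‖ ^ 2) ≤
      Real.sqrt 2 * ∑ i ∈ Finset.range (K + 1),
        Real.sqrt (∑ j ∈ Finset.range (2 ^ (K - i) + 1),
          ‖∑ k ∈ Finset.Ico (j * 2 ^ i) (min ((j + 1) * 2 ^ i) (2 ^ K + 1)),
              (f (k + 1) - f k)‖ ^ 2) := by
  set S : ℕ → ℕ → ℂ := fun i j =>
    ∑ k ∈ Ico (j * 2 ^ i) (min ((j + 1) * 2 ^ i) (2 ^ K + 1)), (f (k + 1) - f k)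
  set J : ℕ → ℕ → Finset ℕ := fun i m =>
    (range (2 ^ (K - i) + 1)).filter (IsMaximalDyadic (n m) (n (m + 1)) i)
  have hdecomp : ∀ m ∈ range M,
      f (n (m + 1)) - f (n m) = ∑ i ∈ range (K + 1), ∑ j ∈ J i m, S i j := by
    intro m hm
    have hm1 : m + 1 ∈ Set.Iic M := mem_range.mp hm
    have hnm : n (m + 1) ≤ 2 ^ K := (hmono.monotoneOn hm1 (Set.mem_Iic.mpr le_rfl) hm1).trans hle
    have hstep : n m ≤ n (m + 1) :=
      hmono.monotoneOn (Set.mem_Iic.mpr (Nat.le_of_succ_le hm1)) hm1 m.le_succ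
    rw [← sum_Ico_sub _ hstep, ← sum_sum_isMaximalDyadic hnm]
    refine sum_congr rfl fun i _ => sum_congr rfl fun j hj => ?_
    have hj := (dyadicInterval_subset_Ico_iff.mp (mem_filter.mp hj).2.1).2
    simp only [S, dyadicInterval, min_eq_left (by omega : (j + 1) * 2 ^ i ≤ 2 ^ K + 1)]
  have hscale : ∀ i ∈ range (K + 1), ∑ m ∈ range M, ‖∑ j ∈ J i m, S i j‖ ^ 2 ≤
      2 * ∑ j ∈ range (2 ^ (K - i) + 1), ‖S i j‖ ^ 2 := fun i _ => by
    exact_mod_cast sum_norm_sum_sq_le_mul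
      (pairwiseDisjoint_filter_isMaximalDyadic hmono.monotoneOn i _)
      (fun m _ => filter_subset _ _) (fun m _ => card_filter_isMaximalDyadic_le_two _ _ _ _) _
  calc √(∑ m ∈ range M, ‖f (n (m + 1)) - f (n m)‖ ^ 2)
      = √(∑ m ∈ range M, ‖∑ i ∈ range (K + 1), ∑ j ∈ J i m, S i j‖ ^ 2) := by
        rw [sum_congr rfl fun m hm => by rw [hdecomp m hm]]
    _ ≤ ∑ i ∈ range (K + 1), √(∑ m ∈ range M, ‖∑ j ∈ J i m, S i j‖ ^ 2) :=
        sqrt_sum_norm_sum_sq_le _ _ _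
    _ ≤ ∑ i ∈ range (K + 1), √2 * √(∑ j ∈ range (2 ^ (K - i) + 1), ‖S i j‖ ^ 2) :=
        sum_le_sum fun i hi => by
          rw [← Real.sqrt_mul zero_le_two]
          exact Real.sqrt_le_sqrt (hscale i hi)
    _ = _ := (mul_sum _ _ _).symm
end

section
/- Let (𝔼_n)_{n∈ℤ} be a sequence of conditional expectation operators associated with an increasing filtration (ℱ_n)_{n∈ℤ} on a σ-finite measure space, and let f ∈ L²(X). Then for every N ∈ ℕ and every strictly increasing sequence I = (I_1 < ... < I_{N+1}) in ℤ, ‖ ( Σ_{j=1}^N sup_{I_j ≤ n < I_{j+1}} |𝔼_n f − 𝔼_{I_j} f|² )^{1/2} ‖_{L²(X)} ≤ C ‖f‖_{L²(X)} with a constant C independent of N, I, and f. -/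
/-!
On a block `[a, c)` the process `n ↦ ‖𝔼_n f - 𝔼_a f‖` is dominated by the martingale
`n ↦ 𝔼_n ‖𝔼_c f - 𝔼_a f‖` (conditional Jensen for the norm), so Doob's `L²` maximal inequality
bounds the `L²` norm of the supremum over the block by `2 ‖𝔼_c f - 𝔼_a f‖₂`. On `L²` the `𝔼_n`
are orthogonal projections onto nested subspaces, so the squared norms of the increments
`𝔼_{I (j+1)} f - 𝔼_{I j} f` telescope to at most `‖f‖₂²`. This gives the inequality with `C = 2`.
-/

open MeasureTheory
open scoped ENNReal NNReal

namespace Submodule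

open Finset

variable {𝕜 E : Type*} [RCLike 𝕜] [NormedAddCommGroup E] [InnerProductSpace 𝕜 E]

theorem norm_starProjection_sub_sq_add_norm_sq {U V : Submodule 𝕜 E}
    [U.HasOrthogonalProjection] [V.HasOrthogonalProjection] (h : U ≤ V) (x : E) :
    ‖V.starProjection x - U.starProjection x‖ ^ 2 + ‖U.starProjection x‖ ^ 2 =
      ‖V.starProjection x‖ ^ 2 := by
  have hUV : U.starProjection (V.starProjection x) = U.starProjection x :=
    congr($(starProjection_comp_starProjection_of_le h) x)
  rw [norm_sq_eq_add_norm_sq_starProjection (V.starProjection x) U, starProjection_orthogonal,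
    sub_apply, ContinuousLinearMap.id_apply, hUV, add_comm]

theorem sum_norm_starProjection_sub_sq_le {ι : Type*} [Preorder ι] {K : ι → Submodule 𝕜 E}
    [∀ i, (K i).HasOrthogonalProjection] (hK : Monotone K) {a : ℕ → ι} {N : ℕ}
    (ha : ∀ j < N, a j ≤ a (j + 1)) (x : E) :
    ∑ j ∈ range N, ‖(K (a (j + 1))).starProjection x - (K (a j)).starProjection x‖ ^ 2 ≤
      ‖x‖ ^ 2 := by
  have htel : ∀ j ∈ range N,
      ‖(K (a (j + 1))).starProjection x - (K (a j)).starProjection x‖ ^ 2 =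
        ‖(K (a (j + 1))).starProjection x‖ ^ 2 - ‖(K (a j)).starProjection x‖ ^ 2 :=
    fun j hj => eq_sub_of_add_eq
      (norm_starProjection_sub_sq_add_norm_sq (hK (ha j (mem_range.1 hj))) x)
  rw [sum_congr rfl htel, sum_range_sub (fun j => ‖(K (a j)).starProjection x‖ ^ 2)]
  have hN : ‖(K (a N)).starProjection x‖ ^ 2 ≤ ‖x‖ ^ 2 :=
    pow_le_pow_left₀ (norm_nonneg _) (norm_starProjection_apply_le _ x) 2
  linarith [sq_nonneg ‖(K (a 0)).starProjection x‖]

end Submodule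

theorem ENNReal.le_of_sq_le_mul {a b : ℝ≥0∞} (ha : a ≠ ∞) (h : a ^ 2 ≤ b * a) : a ≤ b := by
  rcases eq_or_ne a 0 with rfl | ha0
  · exact zero_le
  rw [sq] at h
  exact (ENNReal.mul_le_mul_iff_left ha0 ha).1 h

namespace MeasureTheory

open Finset

variable {X ι E : Type*} {m0 : MeasurableSpace X} {μ : Measure X} [NormedAddCommGroup E]

theorem eLpNorm_two_sq_eq_lintegral (f : X → E) :
    eLpNorm f 2 μ ^ 2 = ∫⁻ x, ‖f x‖ₑ ^ 2 ∂μ := by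
  rw [eLpNorm_eq_lintegral_rpow_enorm_toReal two_ne_zero ENNReal.ofNat_ne_top]
  simp only [ENNReal.toReal_ofNat, ENNReal.rpow_two, one_div]
  rw [← ENNReal.rpow_two, ← ENNReal.rpow_mul, inv_mul_cancel₀ two_ne_zero, ENNReal.rpow_one]

theorem eLpNorm_sqrt_sum_norm_sq_sq (s : Finset ι) {h : ι → X → E}
    (hh : ∀ j ∈ s, AEStronglyMeasurable (h j) μ) :
    eLpNorm (fun x => √(∑ j ∈ s, ‖h j x‖ ^ 2)) 2 μ ^ 2 = ∑ j ∈ s, eLpNorm (h j) 2 μ ^ 2 := by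
  have hpt : ∀ x, ‖√(∑ j ∈ s, ‖h j x‖ ^ 2)‖ₑ ^ 2 = ∑ j ∈ s, ‖h j x‖ₑ ^ 2 := fun x => by
    rw [Real.enorm_of_nonneg (Real.sqrt_nonneg _), ← ENNReal.ofReal_pow (Real.sqrt_nonneg _),
      Real.sq_sqrt (by positivity), ENNReal.ofReal_sum_of_nonneg fun j _ => by positivity]
    simp_rw [ENNReal.ofReal_pow (norm_nonneg _), ofReal_norm]
  simp_rw [eLpNorm_two_sq_eq_lintegral, hpt]
  exact lintegral_finsetSum' _ fun j hj => (hh j hj).enorm.pow_const 2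

theorem eLpNorm_two_le_of_mul_meas_le {M g : X → ℝ} (hM0 : 0 ≤ M) (hM : Measurable M)
    (hMfin : eLpNorm M 2 μ ≠ ∞) (hg : AEMeasurable g μ)
    (hweak : ∀ t > 0, ENNReal.ofReal t * μ {x | t ≤ M x} ≤ ∫⁻ x in {x | t ≤ M x}, ‖g x‖ₑ ∂μ) :
    eLpNorm M 2 μ ≤ 2 * eLpNorm g 2 μ := by
  have hMe : ∀ x, ‖M x‖ₑ = ENNReal.ofReal (M x) := fun x => Real.enorm_of_nonneg (hM0 x)
  set ν := μ.withDensity (‖g ·‖ₑ)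
  refine ENNReal.le_of_sq_le_mul hMfin ?_
  calc eLpNorm M 2 μ ^ 2 = ∫⁻ x, ENNReal.ofReal (M x ^ (2 : ℝ)) ∂μ := by
        simp_rw [eLpNorm_two_sq_eq_lintegral, hMe, Real.rpow_two, ENNReal.ofReal_pow (hM0 _)]
    _ = 2 * ∫⁻ t in Set.Ioi 0, μ {x | t ≤ M x} * ENNReal.ofReal t := by
        rw [lintegral_rpow_eq_lintegral_meas_le_mul μ (ae_of_all _ hM0) hM.aemeasurable two_pos]
        norm_num
    _ ≤ 2 * ∫⁻ t in Set.Ioi 0, ν {x | t ≤ M x} := by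
        gcongr 2 * ?_
        refine setLIntegral_mono' measurableSet_Ioi fun t ht => ?_
        rw [mul_comm, withDensity_apply _ (measurableSet_le measurable_const hM)]
        exact hweak t ht
    _ = 2 * ∫⁻ x, ‖g x‖ₑ * ‖M x‖ₑ ∂μ := by
        rw [← lintegral_eq_lintegral_meas_le ν (ae_of_all _ hM0) hM.aemeasurable,
          lintegral_withDensity_eq_lintegral_mul₀ hg.enorm hM.ennreal_ofReal.aemeasurable]
        simp_rw [hMe]; rfl
    _ ≤ 2 * (eLpNorm g 2 μ * eLpNorm M 2 μ) := by
        gcongr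
        simpa [eLpNorm_eq_lintegral_rpow_enorm_toReal two_ne_zero ENNReal.ofNat_ne_top] using
          ENNReal.lintegral_mul_le_Lp_mul_Lq μ Real.HolderConjugate.two_two hg.enorm
            hM.aemeasurable.enorm
    _ = 2 * eLpNorm g 2 μ * eLpNorm M 2 μ := (mul_assoc _ _ _).symm

def maximalNorm (s : Finset ι) (v : ι → X → E) (x : X) : ℝ :=
  ((s.sup fun n => ‖v n x‖₊ : ℝ≥0) : ℝ)

section MaximalNorm

variable {s : Finset ι} {v : ι → X → E}

@[simp]
theorem maximalNorm_zero : maximalNorm s (fun _ => (0 : X → E)) = 0 := by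
  ext x
  simp [maximalNorm]

theorem maximalNorm_nonneg (x : X) : 0 ≤ maximalNorm s v x := NNReal.coe_nonneg _

theorem norm_le_maximalNorm {n : ι} (hn : n ∈ s) (x : X) : ‖v n x‖ ≤ maximalNorm s v x :=
  NNReal.coe_le_coe.2 (le_sup (f := fun n => ‖v n x‖₊) hn)

theorem iSup_norm_le_maximalNorm {S : Set ι} (hS : S ⊆ s) (x : X) :
    ⨆ n ∈ S, ‖v n x‖ ≤ maximalNorm s v x :=
  Real.iSup_le (fun _ => Real.iSup_le (fun hn => norm_le_maximalNorm (hS hn) x)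
    (maximalNorm_nonneg x)) (maximalNorm_nonneg x)

theorem le_maximalNorm_iff {t : ℝ} (ht : 0 < t) (x : X) :
    t ≤ maximalNorm s v x ↔ ∃ n ∈ s, t ≤ ‖v n x‖ := by
  lift t to ℝ≥0 using ht.le
  simp only [maximalNorm, NNReal.coe_le_coe, ← coe_nnnorm]
  exact Finset.le_sup_iff (bot_lt_iff_ne_bot.2 (by exact_mod_cast ht.ne'))

theorem maximalNorm_le_sum (x : X) : maximalNorm s v x ≤ ∑ n ∈ s, ‖v n x‖ := by
  simp only [maximalNorm, ← coe_nnnorm, ← NNReal.coe_sum, NNReal.coe_le_coe]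
  exact Finset.sup_le fun n hn => single_le_sum (f := fun n => ‖v n x‖₊) (fun _ _ => zero_le) hn

theorem measurable_maximalNorm (hv : ∀ n ∈ s, StronglyMeasurable (v n)) :
    Measurable (maximalNorm s v) := by
  rcases s.eq_empty_or_nonempty with rfl | hs
  · exact measurable_const
  have : Measurable (s.sup' hs fun n x => ‖v n x‖₊) :=
    measurable_sup' hs fun n hn => (hv n hn).nnnorm.measurable
  refine measurable_coe_nnreal_real.comp ?_
  convert this using 1
  ext x
  simp [Finset.sup'_apply, sup'_eq_sup]

end MaximalNorm

theorem mul_meas_le_setLIntegral_of_le_condExp {m : MeasurableSpace X} (hm : m ≤ m0)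
    [SigmaFinite (μ.trim hm)] {u g : X → ℝ} {A : Set X} (hA : MeasurableSet[m] A) {t : ℝ}
    (htu : ∀ x ∈ A, t ≤ u x) (hu0 : 0 ≤ u) (hug : u ≤ᵐ[μ] μ[g|m]) (hg : Integrable g μ) :
    ENNReal.ofReal t * μ A ≤ ∫⁻ x in A, ‖g x‖ₑ ∂μ :=
  calc ENNReal.ofReal t * μ A = ∫⁻ _ in A, ENNReal.ofReal t ∂μ := (setLIntegral_const _ _).symm
    _ ≤ ∫⁻ x in A, ENNReal.ofReal (μ[g|m] x) ∂μ := by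
        refine setLIntegral_mono_ae' (hm A hA) ?_
        filter_upwards [hug] with x hx hxA
        exact ENNReal.ofReal_le_ofReal ((htu x hxA).trans hx)
    _ = ENNReal.ofReal (∫ x in A, μ[g|m] x ∂μ) :=
        (ofReal_integral_eq_lintegral_ofReal integrable_condExp.integrableOn
          (ae_restrict_of_ae (hug.mono fun x hx => (hu0 x).trans hx))).symm
    _ = ENNReal.ofReal (∫ x in A, g x ∂μ) := by rw [setIntegral_condExp hm hg hA]
    _ ≤ ‖∫ x in A, g x ∂μ‖ₑ := by
        rw [Real.enorm_eq_ofReal_abs]; exact ENNReal.ofReal_le_ofReal (le_abs_self _)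
    _ ≤ ∫⁻ x in A, ‖g x‖ₑ ∂μ := enorm_integral_le_lintegral_enorm _

section Doob

variable [LinearOrder ι] {ℱ : Filtration ι m0} [∀ n, SigmaFinite (μ.trim (ℱ.le n))]
  {s : Finset ι} {v : ι → X → E} {g : X → ℝ}

theorem maximal_ineq_of_le_condExp (hv : ∀ n ∈ s, StronglyMeasurable[ℱ n] (v n))
    (hg : Integrable g μ) (hdom : ∀ n ∈ s, (‖v n ·‖) ≤ᵐ[μ] μ[g|ℱ n]) {t : ℝ} (ht : 0 < t) :
    ENNReal.ofReal t * μ {x | t ≤ maximalNorm s v x} ≤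
      ∫⁻ x in {x | t ≤ maximalNorm s v x}, ‖g x‖ₑ ∂μ := by
  classical
  -- `A n`: the points at which `‖v · x‖` reaches `t` for the first time at `n`
  let A : ι → Set X := fun n =>
    {x | t ≤ ‖v n x‖} ∩ ⋂ i ∈ s.filter (· < n), {x | ‖v i x‖ < t}
  have hA : ∀ n ∈ s, MeasurableSet[ℱ n] (A n) := fun n hn =>
    (measurableSet_le measurable_const (hv n hn).norm.measurable).inter <|
      Finset.measurableSet_biInter _ fun i hi => by
        obtain ⟨his, hin⟩ := mem_filter.1 hi
        exact ℱ.mono hin.le _ (measurableSet_lt (hv i his).norm.measurable measurable_const)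
  have hA0 : ∀ n ∈ s, MeasurableSet (A n) := fun n hn => ℱ.le n _ (hA n hn)
  have hdisj_lt : ∀ i ∈ s, ∀ j, i < j → Disjoint (A i) (A j) := fun i hi j hij =>
    Set.disjoint_left.2 fun x hxi hxj =>
      (show t ≤ ‖v i x‖ from hxi.1).not_gt
        (show ‖v i x‖ < t from Set.mem_iInter₂.1 hxj.2 i (mem_filter.2 ⟨hi, hij⟩))
  have hdisj : (s : Set ι).PairwiseDisjoint A := fun i hi j hj hij => by
    rcases hij.lt_or_gt with h | h
    · exact hdisj_lt i hi j h
    · exact (hdisj_lt j hj i h).symm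
  have hunion : {x | t ≤ maximalNorm s v x} = ⋃ n ∈ s, A n := by
    ext x
    simp only [Set.mem_ofPred_eq, Set.mem_iUnion, le_maximalNorm_iff ht]
    constructor
    · rintro ⟨n, hn, htn⟩
      let S := s.filter fun i => t ≤ ‖v i x‖
      have hS : S.Nonempty := ⟨n, mem_filter.2 ⟨hn, htn⟩⟩
      obtain ⟨hks, hkt⟩ := mem_filter.1 (S.min'_mem hS)
      refine ⟨S.min' hS, hks, hkt, Set.mem_iInter₂.2 fun i hi => ?_⟩
      obtain ⟨his, hik⟩ := mem_filter.1 hi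
      exact lt_of_not_ge fun hti => hik.not_ge (S.min'_le i (mem_filter.2 ⟨his, hti⟩))
    · rintro ⟨n, hn, hx⟩
      exact ⟨n, hn, hx.1⟩
  calc ENNReal.ofReal t * μ {x | t ≤ maximalNorm s v x}
      = ∑ n ∈ s, ENNReal.ofReal t * μ (A n) := by
        rw [hunion, measure_biUnion_finset hdisj hA0, mul_sum]
    _ ≤ ∑ n ∈ s, ∫⁻ x in A n, ‖g x‖ₑ ∂μ := sum_le_sum fun n hn =>
        mul_meas_le_setLIntegral_of_le_condExp (ℱ.le n) (hA n hn) (fun x hx => hx.1)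
          (fun x => norm_nonneg _) (hdom n hn) hg
    _ = ∫⁻ x in {x | t ≤ maximalNorm s v x}, ‖g x‖ₑ ∂μ := by
        rw [hunion, lintegral_biUnion_finset hdisj hA0]

theorem eLpNorm_maximalNorm_le_of_le_condExp (hv : ∀ n ∈ s, StronglyMeasurable[ℱ n] (v n))
    (hg : MemLp g 2 μ) (hg1 : Integrable g μ) (hdom : ∀ n ∈ s, (‖v n ·‖) ≤ᵐ[μ] μ[g|ℱ n]) :
    eLpNorm (maximalNorm s v) 2 μ ≤ 2 * eLpNorm g 2 μ := by
  have hvm : ∀ n ∈ s, StronglyMeasurable (v n) := fun n hn => (hv n hn).mono (ℱ.le n)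
  have hM := measurable_maximalNorm hvm
  have hv2 : ∀ n ∈ s, MemLp (‖v n ·‖) 2 μ := fun n hn =>
    (hg.condExp (m := ℱ n) one_le_two).of_le (hvm n hn).norm.aestronglyMeasurable <|
      (hdom n hn).mono fun x hx => by rw [norm_norm]; exact hx.trans (Real.le_norm_self _)
  have hM2 : MemLp (maximalNorm s v) 2 μ :=
    (memLp_finsetSum' s hv2).of_le hM.aestronglyMeasurable <| ae_of_all _ fun x => by
      rw [Real.norm_of_nonneg (maximalNorm_nonneg x), Finset.sum_apply,
        Real.norm_of_nonneg (sum_nonneg fun _ _ => norm_nonneg _)]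
      exact maximalNorm_le_sum x
  exact eLpNorm_two_le_of_mul_meas_le maximalNorm_nonneg hM hM2.eLpNorm_ne_top
    hg.aestronglyMeasurable.aemeasurable fun t ht => maximal_ineq_of_le_condExp hv hg1 hdom ht

end Doob

section Martingale

variable [NormedSpace ℝ E] [CompleteSpace E]

theorem condExp_sub_condExp_ae_eq_condExp [Preorder ι] (ℱ : Filtration ι m0)
    [∀ n, SigmaFinite (μ.trim (ℱ.le n))] (f : X → E) {a n c : ι} (han : a ≤ n) (hnc : n ≤ c) :
    μ[f|ℱ n] - μ[f|ℱ a] =ᵐ[μ] μ[μ[f|ℱ c] - μ[f|ℱ a]|ℱ n] := by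
  have hc : μ[μ[f|ℱ c]|ℱ n] =ᵐ[μ] μ[f|ℱ n] := condExp_condExp_of_le (ℱ.mono hnc) (ℱ.le c)
  have ha : μ[μ[f|ℱ a]|ℱ n] = μ[f|ℱ a] := condExp_of_stronglyMeasurable (ℱ.le n)
    (stronglyMeasurable_condExp.mono (ℱ.mono han)) integrable_condExp
  exact ((condExp_sub integrable_condExp integrable_condExp _).trans
    (hc.sub (Filter.EventuallyEq.of_eq ha))).symm

theorem eLpNorm_maximalNorm_condExp_sub_le [LinearOrder ι] (ℱ : Filtration ι m0)
    [∀ n, SigmaFinite (μ.trim (ℱ.le n))] {f : X → E} (hf : MemLp f 2 μ) {s : Finset ι}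
    {a c : ι} (hs : ∀ n ∈ s, a ≤ n ∧ n ≤ c) :
    eLpNorm (maximalNorm s fun n => μ[f|ℱ n] - μ[f|ℱ a]) 2 μ ≤
      2 * eLpNorm (μ[f|ℱ c] - μ[f|ℱ a]) 2 μ := by
  by_cases hfi : Integrable f μ
  swap
  · simp [condExp_of_not_integrable hfi]
  rw [← eLpNorm_norm (μ[f|ℱ c] - μ[f|ℱ a])]
  refine eLpNorm_maximalNorm_le_of_le_condExp (ℱ := ℱ) (fun n hn => ?_)
    ((hf.condExp one_le_two).sub (hf.condExp one_le_two)).norm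
    (integrable_condExp.sub integrable_condExp).norm fun n hn => ?_
  · exact stronglyMeasurable_condExp.sub (stronglyMeasurable_condExp.mono (ℱ.mono (hs n hn).1))
  · filter_upwards [condExp_sub_condExp_ae_eq_condExp ℱ f (hs n hn).1 (hs n hn).2,
      norm_condExp_le (μ := μ) (m := ℱ n) (μ[f|ℱ c] - μ[f|ℱ a])] with x hx hJensen
    rw [hx]
    exact hJensen

end Martingale

theorem sum_sq_eLpNorm_condExp_sub_le [Preorder ι] {E : Type*} [NormedAddCommGroup E]
    [InnerProductSpace ℝ E] [CompleteSpace E] (ℱ : Filtration ι m0)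
    [∀ n, SigmaFinite (μ.trim (ℱ.le n))] {f : X → E} (hf : MemLp f 2 μ) {a : ℕ → ι} {N : ℕ}
    (ha : ∀ j < N, a j ≤ a (j + 1)) :
    ∑ j ∈ range N, eLpNorm (μ[f|ℱ (a (j + 1))] - μ[f|ℱ (a j)]) 2 μ ^ 2 ≤ eLpNorm f 2 μ ^ 2 := by
  by_cases hfi : Integrable f μ
  swap
  · simp [condExp_of_not_integrable hfi]
  let K : ι → Submodule ℝ (Lp E 2 μ) := fun n => lpMeas E ℝ (ℱ n) 2 μ
  have : ∀ n, (K n).HasOrthogonalProjection := fun n => by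
    have := Fact.mk (ℱ.le n); infer_instance
  have hK : Monotone K := fun i j hij g hg => by
    rw [mem_lpMeas_iff_aestronglyMeasurable] at hg ⊢
    exact hg.mono (ℱ.mono hij)
  set F := hf.toLp f
  have hP : ∀ n, μ[f|ℱ n] =ᵐ[μ] (K n).starProjection F := fun n =>
    (hf.condExpL2_ae_eq_condExp' (𝕜 := ℝ) (ℱ.le n) hfi).symm
  have hsq : ∀ G : Lp E 2 μ, eLpNorm G 2 μ ^ 2 = ENNReal.ofReal (‖G‖ ^ 2) := fun G => by
    rw [← Lp.enorm_def, ENNReal.ofReal_pow (norm_nonneg G), ofReal_norm]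
  have hdiff : ∀ j, eLpNorm (μ[f|ℱ (a (j + 1))] - μ[f|ℱ (a j)]) 2 μ ^ 2 =
      ENNReal.ofReal (‖(K (a (j + 1))).starProjection F - (K (a j)).starProjection F‖ ^ 2) :=
    fun j => by
      rw [← hsq, eLpNorm_congr_ae (((hP _).sub (hP _)).trans (Lp.coeFn_sub _ _).symm)]
  rw [sum_congr rfl fun j _ => hdiff j, ← ENNReal.ofReal_sum_of_nonneg fun j _ => by positivity,
    eLpNorm_congr_ae hf.coeFn_toLp.symm, hsq]
  exact ENNReal.ofReal_le_ofReal (Submodule.sum_norm_starProjection_sub_sq_le hK ha F)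

theorem sum_sq_eLpNorm_maximalNorm_condExp_sub_le [LinearOrder ι] [LocallyFiniteOrder ι]
    {E : Type*} [NormedAddCommGroup E] [InnerProductSpace ℝ E] [CompleteSpace E]
    (ℱ : Filtration ι m0) [∀ n, SigmaFinite (μ.trim (ℱ.le n))] {f : X → E} (hf : MemLp f 2 μ)
    {a : ℕ → ι} {N : ℕ} (ha : ∀ j < N, a j ≤ a (j + 1)) :
    ∑ j ∈ range N,
        eLpNorm (maximalNorm (Ico (a j) (a (j + 1))) fun n => μ[f|ℱ n] - μ[f|ℱ (a j)]) 2 μ ^ 2 ≤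
      2 ^ 2 * eLpNorm f 2 μ ^ 2 :=
  calc _ ≤ ∑ j ∈ range N, (2 * eLpNorm (μ[f|ℱ (a (j + 1))] - μ[f|ℱ (a j)]) 2 μ) ^ 2 := by
        gcongr with j
        exact eLpNorm_maximalNorm_condExp_sub_le ℱ hf fun n hn =>
          ⟨(mem_Ico.1 hn).1, (mem_Ico.1 hn).2.le⟩
    _ = 2 ^ 2 * ∑ j ∈ range N, eLpNorm (μ[f|ℱ (a (j + 1))] - μ[f|ℱ (a j)]) 2 μ ^ 2 := by
        simp_rw [mul_pow, mul_sum]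
    _ ≤ 2 ^ 2 * eLpNorm f 2 μ ^ 2 := by
        gcongr
        exact sum_sq_eLpNorm_condExp_sub_le ℱ hf ha

end MeasureTheory

/-- The `L²` oscillation inequality for martingales: for conditional expectations
`𝔼_n = 𝔼[·|ℱ_n]` along an increasing filtration indexed by `ℤ` on a σ-finite measure
space, `‖(Σ_{j<N} sup_{I j ≤ n < I (j+1)} |𝔼_n f − 𝔼_{I j} f|²)^{1/2}‖_{L²} ≤ C ‖f‖_{L²}`
with `C` independent of `N`, `I` and `f`. -/
theorem martingale_oscillation_L2 {X : Type*} {m0 : MeasurableSpace X} (μ : Measure X)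
    [SigmaFinite μ] (ℱ : Filtration ℤ m0) [∀ n : ℤ, SigmaFinite (μ.trim (ℱ.le n))] :
    ∃ C > 0, ∀ (f : X → ℂ), MemLp f 2 μ → ∀ (N : ℕ) (I : ℕ → ℤ),
      StrictMonoOn I (Set.Iic N) →
      eLpNorm (fun x => Real.sqrt (∑ j ∈ Finset.range N,
          (⨆ n ∈ Set.Ico (I j) (I (j + 1)),
            ‖(μ[f|ℱ n]) x - (μ[f|ℱ (I j)]) x‖) ^ 2)) 2 μ ≤
        ENNReal.ofReal C * eLpNorm f 2 μ := by
  refine ⟨2, two_pos, fun f hf N I hI => ?_⟩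
  let S : ℕ → X → ℝ := fun j =>
    maximalNorm (Finset.Ico (I j) (I (j + 1))) fun n => μ[f|ℱ n] - μ[f|ℱ (I j)]
  have hS : ∀ j, StronglyMeasurable (S j) := fun j =>
    (measurable_maximalNorm fun n _ => (stronglyMeasurable_condExp.mono (ℱ.le n)).sub
      (stronglyMeasurable_condExp.mono (ℱ.le (I j)))).stronglyMeasurable
  have hI_mono : ∀ j < N, I j ≤ I (j + 1) := fun j hj =>
    (hI (Set.mem_Iic.2 hj.le) (Set.mem_Iic.2 hj) j.lt_succ_self).le
  calc _ ≤ eLpNorm (fun x => √(∑ j ∈ Finset.range N, ‖S j x‖ ^ 2)) 2 μ := by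
        refine eLpNorm_mono_real fun x => ?_
        rw [Real.norm_of_nonneg (Real.sqrt_nonneg _)]
        gcongr with j
        · exact Real.iSup_nonneg fun _ => Real.iSup_nonneg fun _ => norm_nonneg _
        · rw [Real.norm_of_nonneg (maximalNorm_nonneg x)]
          exact iSup_norm_le_maximalNorm (v := fun n => μ[f|ℱ n] - μ[f|ℱ (I j)])
            (Finset.coe_Ico (I j) (I (j + 1))).ge x
    _ ≤ ENNReal.ofReal 2 * eLpNorm f 2 μ := by
      rw [ENNReal.ofReal_ofNat, ← ENNReal.pow_le_pow_left_iff two_ne_zero, mul_pow,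
        eLpNorm_sqrt_sum_norm_sq_sq _ fun j _ => (hS j).aestronglyMeasurable]
      exact sum_sq_eLpNorm_maximalNorm_condExp_sub_le ℱ hf hI_mono
end

section
/- Let q ∈ ℕ, a ∈ ℤ with gcd(a,q) = 1 and q ≥ 2, and let d ≥ 2. Define the one-dimensional Gauss–Weyl sum G(a/q) := q^{-1} Σ_{r=1}^{q} e^{2πi (a/q) r^d}. Then there exist constants δ > 0 and C > 0 depending only on d such that |G(a/q)| ≤ C q^{-δ}. -/
/-!
Weyl differencing: for an additive character `ψ` of a finite ring,
`|𝔼ₓ ψ(P x)|² ≤ 𝔼ₕ |𝔼ₓ ψ(Δₕ P x)|` with `Δₕ P = P(X + h) - P`, which lowers the degree by one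
and turns the top coefficient `c` into `deg P · h · c`. Over `ZMod q` this gives, by induction
down to linear sums (which vanish unless their slope is `0`),
`|𝔼ₓ ψ(P x)| ^ 2 ^ k ≤ τ(q) ^ k · gcd(q, (k + 1)! c) / q` for `deg P ≤ k + 1`: the weight
`gcd(q, ·)` is submultiplicative and has mean at most `τ(q)`. For `P = a X ^ d` with `a` a unit,
squaring and the divisor bound `τ(q) ^ (2k) ≪ q` leave `|G(a/q)| ^ 2 ^ d ≪ q⁻¹`.
-/

open Finset Polynomial ComplexConjugate
open scoped BigOperators Nat

theorem Finset.pow_expect_le_expect_pow {ι : Type*} [Fintype ι] [Nonempty ι] (f : ι → ℝ)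
    (hf : ∀ i, 0 ≤ f i) (n : ℕ) : (𝔼 i, f i) ^ n ≤ 𝔼 i, f i ^ n := by
  have hcard : (Fintype.card ι : ℝ) ≠ 0 := Nat.cast_ne_zero.mpr Fintype.card_ne_zero
  simp only [Fintype.expect_eq_sum_div_card, div_eq_inv_mul, mul_sum]
  refine Real.pow_arith_mean_le_arith_mean_pow _ _ _ (fun _ _ => by positivity) ?_
    (fun i _ => hf i) n
  rw [sum_const, card_univ, nsmul_eq_mul, mul_inv_cancel₀ hcard]

theorem Real.le_rpow_inv_mul_rpow_neg_of_pow_le {s C x : ℝ} {n : ℕ} (hs : 0 ≤ s) (hx : 0 < x)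
    (hn : n ≠ 0) (h : s ^ n ≤ C / x) : s ≤ C ^ (n : ℝ)⁻¹ * x ^ (-(n : ℝ)⁻¹) := by
  have hC : 0 ≤ C := by
    have := (pow_nonneg hs n).trans h
    rwa [le_div_iff₀ hx, zero_mul] at this
  calc s = (s ^ n) ^ (n : ℝ)⁻¹ := (Real.pow_rpow_inv_natCast hs hn).symm
    _ ≤ (C / x) ^ (n : ℝ)⁻¹ := Real.rpow_le_rpow (by positivity) h (by positivity)
    _ = C ^ (n : ℝ)⁻¹ * x ^ (-(n : ℝ)⁻¹) := by
      rw [Real.div_rpow hC hx.le, Real.rpow_neg hx.le, div_eq_mul_inv]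

namespace Nat

theorem succ_pow_le_pow_mul_two_pow {j : ℕ} (hj : 0 < j) (e : ℕ) : (e + 1) ^ j ≤ j ^ j * 2 ^ e :=
  calc (e + 1) ^ j ≤ (j * 2 ^ (e / j)) ^ j :=
        Nat.pow_le_pow_left ((lt_mul_div_succ e hj).trans_le
          (Nat.mul_le_mul_left j Nat.lt_two_pow_self)) j
    _ = j ^ j * 2 ^ (e / j * j) := by rw [mul_pow, ← pow_mul]
    _ ≤ j ^ j * 2 ^ e := Nat.mul_le_mul_left _ (Nat.pow_le_pow_right two_pos (div_mul_le_self e j))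

theorem succ_pow_le_mul_prime_pow {j p : ℕ} (hj : 0 < j) (hp : p.Prime) (e : ℕ) :
    (e + 1) ^ j ≤ (if p < 2 ^ j then j ^ j else 1) * p ^ e := by
  split_ifs with hsmall
  · exact (succ_pow_le_pow_mul_two_pow hj e).trans
      (Nat.mul_le_mul_left _ (Nat.pow_le_pow_left hp.two_le e))
  · calc (e + 1) ^ j ≤ (2 ^ e) ^ j := Nat.pow_le_pow_left Nat.lt_two_pow_self j
      _ = (2 ^ j) ^ e := by rw [← pow_mul, ← pow_mul, mul_comm]
      _ ≤ 1 * p ^ e := by rw [one_mul]; exact Nat.pow_le_pow_left (not_lt.mp hsmall) e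

theorem card_divisors_pow_le {j : ℕ} (hj : 0 < j) {n : ℕ} (hn : n ≠ 0) :
    #n.divisors ^ j ≤ (j ^ j) ^ 2 ^ j * n := by
  have hsmall : ∏ p ∈ n.primeFactors, (if p < 2 ^ j then j ^ j else 1) ≤ (j ^ j) ^ 2 ^ j := by
    rw [prod_ite, prod_const_one, mul_one, prod_const]
    refine Nat.pow_le_pow_right (by positivity) ((card_le_card fun p hp => ?_).trans
      (card_range _).le)
    exact mem_range.mpr (mem_filter.mp hp).2
  have hprod : ∏ p ∈ n.primeFactors, p ^ n.factorization p = n :=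
    prod_factorization_pow_eq_self hn
  calc #n.divisors ^ j = ∏ p ∈ n.primeFactors, (n.factorization p + 1) ^ j := by
        rw [card_divisors hn, prod_pow]
    _ ≤ ∏ p ∈ n.primeFactors, (if p < 2 ^ j then j ^ j else 1) * p ^ n.factorization p :=
        prod_le_prod' fun p hp => succ_pow_le_mul_prime_pow hj (prime_of_mem_primeFactors hp) _
    _ ≤ (j ^ j) ^ 2 ^ j * n := by
        rw [prod_mul_distrib, hprod]
        exact Nat.mul_le_mul_right _ hsmall

end Nat

namespace Polynomial

variable {R : Type*} [CommRing R]

theorem eval_hasseDeriv_of_natDegree_le {P : R[X]} {n : ℕ} (hP : P.natDegree ≤ n + 1) (h : R) :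
    (hasseDeriv n P).eval h = P.coeff n + (n + 1) * h * P.coeff (n + 1) := by
  have hdeg : (hasseDeriv n P).natDegree ≤ 1 := (natDegree_hasseDeriv_le P n).trans (by omega)
  rw [eq_X_add_C_of_natDegree_le_one hdeg]
  simp only [eval_add, eval_mul, eval_C, eval_X, hasseDeriv_coeff, zero_add, Nat.choose_self,
    add_comm 1 n, Nat.choose_succ_self_right]
  push_cast
  ring

theorem natDegree_taylor_sub_le {P : R[X]} {n : ℕ} (hP : P.natDegree ≤ n + 1) (h : R) :
    (taylor h P - P).natDegree ≤ n := by
  refine natDegree_le_iff_coeff_eq_zero.mpr fun m hm => ?_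
  have hdeg : (hasseDeriv m P).natDegree ≤ 0 := (natDegree_hasseDeriv_le P m).trans (by omega)
  rw [coeff_sub, taylor_coeff, eq_C_of_natDegree_le_zero hdeg]
  simp [hasseDeriv_coeff]

theorem coeff_taylor_sub {P : R[X]} {n : ℕ} (hP : P.natDegree ≤ n + 1) (h : R) :
    (taylor h P - P).coeff n = (n + 1) * h * P.coeff (n + 1) := by
  rw [coeff_sub, taylor_coeff, eval_hasseDeriv_of_natDegree_le hP, add_sub_cancel_left]

end Polynomial

namespace AddChar

variable {R : Type*} [CommRing R] [Fintype R]

theorem norm_expect_eval_sq_le (ψ : AddChar R ℂ) (P : R[X]) :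
    ‖𝔼 x, ψ (P.eval x)‖ ^ 2 ≤ 𝔼 h, ‖𝔼 x, ψ ((taylor h P - P).eval x)‖ := by
  set A := 𝔼 x, ψ (P.eval x)
  have hterm (h x : R) :
      ψ ((taylor h P - P).eval x) = ψ (P.eval (x + h)) * conj (ψ (P.eval x)) := by
    rw [eval_sub, taylor_eval, sub_eq_add_neg, map_add_eq_mul, map_neg_eq_conj]
  have hshift (x : R) : 𝔼 h, ψ (P.eval (x + h)) = A :=
    Fintype.expect_equiv (Equiv.addLeft x) _ _ fun _ => rfl
  have hsq : 𝔼 h, 𝔼 x, ψ ((taylor h P - P).eval x) = A * conj A := by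
    simp only [hterm]
    rw [expect_comm, map_expect, mul_expect]
    simp only [← expect_mul, hshift]
  calc ‖A‖ ^ 2 = ‖A * conj A‖ := by rw [norm_mul, RCLike.norm_conj, sq]
    _ = ‖𝔼 h, 𝔼 x, ψ ((taylor h P - P).eval x)‖ := by rw [hsq]
    _ ≤ 𝔼 h, ‖𝔼 x, ψ ((taylor h P - P).eval x)‖ := RCLike.norm_expect_le (K := ℝ)

theorem norm_expect_le_one (ψ : AddChar R ℂ) (f : R → R) : ‖𝔼 x, ψ (f x)‖ ≤ 1 :=
  RCLike.norm_expect_le (K := ℝ) |>.trans <| by simp [ψ.norm_apply]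

theorem expect_eval_eq_zero_of_natDegree_le_one {ψ : AddChar R ℂ} (hψ : ψ.IsPrimitive)
    {Q : R[X]} (hQ : Q.natDegree ≤ 1) (hc : Q.coeff 1 ≠ 0) : 𝔼 x, ψ (Q.eval x) = 0 := by
  rw [eq_X_add_C_of_natDegree_le_one hQ]
  simp only [eval_add, eval_mul, eval_C, eval_X, map_add_eq_mul, ← mulShift_apply, ← expect_mul,
    expect_eq_zero_iff_ne_zero.mpr (hψ hc), zero_mul]

end AddChar

namespace ZMod

variable {q : ℕ}

theorem gcd_val_natCast_le {n : ℕ} (hn : n ≠ 0) : q.gcd (n : ZMod q).val ≤ n := by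
  rw [val_natCast, Nat.gcd_comm, ← Nat.gcd_rec]
  exact Nat.gcd_le_right q (Nat.pos_of_ne_zero hn)

variable [NeZero q]

theorem sum_val_eq_sum_range {M : Type*} [AddCommMonoid M] (f : ℕ → M) :
    ∑ a : ZMod q, f a.val = ∑ k ∈ range q, f k := by
  obtain ⟨n, rfl⟩ : ∃ n, q = n + 1 := Nat.exists_eq_succ_of_ne_zero (NeZero.ne q)
  exact Fin.sum_univ_eq_sum_range _ _

theorem sum_Icc_natCast {M : Type*} [AddCommMonoid M] (f : ZMod q → M) :
    ∑ r ∈ Icc 1 q, f r = ∑ a, f a := calc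
  ∑ r ∈ Icc 1 q, f r = ∑ k ∈ range q, f ((k : ZMod q) + 1) := by
    rw [range_eq_Ico, ← Ico_add_one_right_eq_Icc]
    simpa using (sum_Ico_add' (fun r : ℕ => f r) 0 q 1).symm
  _ = ∑ a : ZMod q, f (a + 1) := by
    simp only [← sum_val_eq_sum_range (fun k => f ((k : ZMod q) + 1)), natCast_zmod_val]
  _ = ∑ a, f a := Fintype.sum_equiv (Equiv.addRight 1) _ _ fun _ => rfl

theorem gcd_val_mul_le (a b : ZMod q) : q.gcd (a * b).val ≤ q.gcd a.val * q.gcd b.val := by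
  have hq := q.pos_of_neZero
  rw [val_mul, Nat.gcd_comm, ← Nat.gcd_rec]
  exact Nat.le_of_dvd (Nat.mul_pos (Nat.gcd_pos_of_pos_left _ hq) (Nat.gcd_pos_of_pos_left _ hq))
    (Nat.gcd_mul_right_dvd_mul_gcd q a.val b.val)

theorem gcd_val_intCast (a : ℤ) : q.gcd (a : ZMod q).val = Int.gcd a q := by
  rw [Nat.gcd_comm, ← Int.gcd_natCast_natCast, val_intCast, Int.gcd_emod]

theorem expect_gcd_val_le : 𝔼 a : ZMod q, (q.gcd a.val : ℝ) ≤ #q.divisors := by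
  have hmaps : ∀ k ∈ range q, q.gcd k ∈ q.divisors :=
    fun k _ => Nat.mem_divisors.mpr ⟨Nat.gcd_dvd_left q k, NeZero.ne q⟩
  -- exactly `φ (q / g)` of the `k < q` have `gcd q k = g`
  have hfiber (g : ℕ) (hg : g ∈ q.divisors) : ∑ k ∈ range q with q.gcd k = g, q.gcd k ≤ q :=
    calc ∑ k ∈ range q with q.gcd k = g, q.gcd k = g * φ (q / g) := by
          rw [sum_congr rfl fun k hk => (mem_filter.mp hk).2, sum_const, smul_eq_mul,
            Nat.totient_div_of_dvd (Nat.dvd_of_mem_divisors hg), mul_comm]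
      _ ≤ g * (q / g) := Nat.mul_le_mul_left g (Nat.totient_le _)
      _ = q := Nat.mul_div_cancel' (Nat.dvd_of_mem_divisors hg)
  have hsum : ∑ a : ZMod q, q.gcd a.val ≤ #q.divisors * q := by
    rw [sum_val_eq_sum_range (q.gcd ·), ← sum_fiberwise_of_maps_to hmaps, ← smul_eq_mul,
      ← sum_const]
    exact sum_le_sum hfiber
  rw [Fintype.expect_eq_sum_div_card, card, div_le_iff₀ (Nat.cast_pos.mpr q.pos_of_neZero)]
  exact_mod_cast hsum

theorem norm_expect_stdAddChar_eval_pow_le (k : ℕ) {P : (ZMod q)[X]} (hP : P.natDegree ≤ k + 1) :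
    ‖𝔼 x, stdAddChar (P.eval x)‖ ^ 2 ^ k ≤
      (#q.divisors : ℝ) ^ k * q.gcd (((k + 1)! : ZMod q) * P.coeff (k + 1)).val / q := by
  induction k generalizing P with
  | zero =>
    simp only [pow_zero, pow_one, one_mul, zero_add, Nat.factorial_one, Nat.cast_one]
    by_cases hc : P.coeff 1 = 0
    · rw [hc, val_zero, Nat.gcd_zero_right, div_self (Nat.cast_ne_zero.mpr (NeZero.ne q))]
      exact AddChar.norm_expect_le_one _ _
    · rw [AddChar.expect_eval_eq_zero_of_natDegree_le_one (isPrimitive_stdAddChar q) hP hc,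
        norm_zero]
      positivity
  | succ k ih =>
    set M : ZMod q := ((k + 2)! : ZMod q) * P.coeff (k + 2) with hM
    have hdiff (h : ZMod q) : ‖𝔼 x, stdAddChar ((taylor h P - P).eval x)‖ ^ 2 ^ k ≤
        (#q.divisors : ℝ) ^ k * q.gcd M.val / q * q.gcd h.val := by
      have hcoeff : ((k + 1)! : ZMod q) * (taylor h P - P).coeff (k + 1) = M * h := by
        rw [coeff_taylor_sub hP, hM, Nat.factorial_succ (k + 1)]; push_cast; ring
      calc _ ≤ (#q.divisors : ℝ) ^ k * q.gcd (M * h).val / q :=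
            hcoeff ▸ ih (natDegree_taylor_sub_le hP h)
        _ ≤ (#q.divisors : ℝ) ^ k * (q.gcd M.val * q.gcd h.val) / q := by
            gcongr; exact_mod_cast gcd_val_mul_le M h
        _ = _ := by ring
    calc ‖𝔼 x, stdAddChar (P.eval x)‖ ^ 2 ^ (k + 1)
        = (‖𝔼 x, stdAddChar (P.eval x)‖ ^ 2) ^ 2 ^ k := by rw [pow_succ', pow_mul]
      _ ≤ (𝔼 h, ‖𝔼 x, stdAddChar ((taylor h P - P).eval x)‖) ^ 2 ^ k :=
        pow_le_pow_left₀ (sq_nonneg _) (AddChar.norm_expect_eval_sq_le _ P) _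
      _ ≤ 𝔼 h, ‖𝔼 x, stdAddChar ((taylor h P - P).eval x)‖ ^ 2 ^ k :=
        pow_expect_le_expect_pow _ (fun _ => norm_nonneg _) _
      _ ≤ 𝔼 h : ZMod q, (#q.divisors : ℝ) ^ k * q.gcd M.val / q * q.gcd h.val :=
        expect_le_expect fun h _ => hdiff h
      _ ≤ (#q.divisors : ℝ) ^ k * q.gcd M.val / q * #q.divisors := by
        rw [← mul_expect]
        exact mul_le_mul_of_nonneg_left expect_gcd_val_le (by positivity)
      _ = (#q.divisors : ℝ) ^ (k + 1) * q.gcd M.val / q := by ring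

theorem norm_expect_stdAddChar_monomial_pow_le {k : ℕ} (hk : 0 < k) {a : ℤ}
    (ha : Int.gcd a q = 1) :
    ‖𝔼 x : ZMod q, stdAddChar ((C (a : ZMod q) * X ^ (k + 1)).eval x)‖ ^ 2 ^ (k + 1) ≤
      ((2 * k) ^ (2 * k)) ^ 2 ^ (2 * k) * ((k + 1)! : ℝ) ^ 2 / q := by
  have hgcd : (q.gcd (((k + 1)! : ZMod q) * a).val : ℝ) ≤ (k + 1)! := by
    have := (gcd_val_mul_le ((k + 1)! : ZMod q) a).trans
      (Nat.mul_le_mul (gcd_val_natCast_le (Nat.factorial_ne_zero _))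
        ((gcd_val_intCast (q := q) a).trans ha).le)
    exact_mod_cast this.trans_eq (mul_one _)
  have hdiv : (#q.divisors : ℝ) ^ (2 * k) ≤ ((2 * k) ^ (2 * k)) ^ 2 ^ (2 * k) * q := by
    exact_mod_cast Nat.card_divisors_pow_le (by omega : 0 < 2 * k) (NeZero.ne q)
  have hmain := norm_expect_stdAddChar_eval_pow_le k (natDegree_C_mul_X_pow_le (a : ZMod q) (k + 1))
  rw [coeff_C_mul_X_pow, if_pos rfl] at hmain
  calc _ = (‖𝔼 x : ZMod q, stdAddChar ((C (a : ZMod q) * X ^ (k + 1)).eval x)‖ ^ 2 ^ k) ^ 2 := by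
        rw [pow_succ 2 k, pow_mul]
    _ ≤ ((#q.divisors : ℝ) ^ k * (k + 1)! / q) ^ 2 := by
        gcongr
        exact hmain.trans (by gcongr)
    _ = (#q.divisors : ℝ) ^ (2 * k) * ((k + 1)! : ℝ) ^ 2 / q / q := by ring
    _ ≤ ((2 * k) ^ (2 * k)) ^ 2 ^ (2 * k) * q * ((k + 1)! : ℝ) ^ 2 / q / q := by gcongr
    _ = _ := by field_simp

theorem inv_mul_sum_Icc_exp_eq_expect (a : ℤ) (d : ℕ) :
    (q : ℂ)⁻¹ * ∑ r ∈ Icc 1 q, Complex.exp (2 * Real.pi * Complex.I * a * (r : ℂ) ^ d / q) =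
      𝔼 x : ZMod q, stdAddChar ((C (a : ZMod q) * X ^ d).eval x) := by
  rw [Fintype.expect_eq_sum_div_card, card, ← sum_Icc_natCast, div_eq_inv_mul]
  congr 1
  refine sum_congr rfl fun r _ => ?_
  have hcast : (C (a : ZMod q) * X ^ d).eval (r : ZMod q) = ((a * (r : ℤ) ^ d : ℤ) : ZMod q) := by
    simp
  rw [hcast, stdAddChar_coe]
  congr 1
  push_cast
  ring

end ZMod

/-- Gauss–Weyl sum estimate: for `d ≥ 2` there are `δ > 0` and `C > 0`, depending only
on `d`, such that `|q⁻¹ Σ_{r=1}^q e((a/q) r^d)| ≤ C q^{-δ}` whenever `q ≥ 2` and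
`gcd(a,q) = 1`. -/
theorem gauss_sum_estimate (d : ℕ) (hd : 2 ≤ d) :
    ∃ δ > (0:ℝ), ∃ C > (0:ℝ), ∀ q : ℕ, 2 ≤ q → ∀ a : ℤ, Int.gcd a q = 1 →
      ‖(q : ℂ)⁻¹ * ∑ r ∈ Finset.Icc 1 q,
          Complex.exp (2 * Real.pi * Complex.I * (a : ℂ) * (r : ℂ) ^ d / (q : ℂ))‖ ≤
        C * (q : ℝ) ^ (-δ) := by
  obtain ⟨k, hk, rfl⟩ : ∃ k, 0 < k ∧ d = k + 1 := ⟨d - 1, by omega, by omega⟩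
  refine ⟨((2 ^ (k + 1) : ℕ) : ℝ)⁻¹, by positivity,
    (((2 * k) ^ (2 * k)) ^ 2 ^ (2 * k) * ((k + 1)! : ℝ) ^ 2) ^ ((2 ^ (k + 1) : ℕ) : ℝ)⁻¹,
    by positivity, fun q hq a ha => ?_⟩
  have : NeZero q := ⟨by omega⟩
  rw [ZMod.inv_mul_sum_Icc_exp_eq_expect]
  exact Real.le_rpow_inv_mul_rpow_neg_of_pow_le (norm_nonneg _) (by positivity) (by positivity)
    (ZMod.norm_expect_stdAddChar_monomial_pow_le hk ha)
end
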